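/- The function u(z) = log( (1−|a|²) / |1 − conj(a)z|² ) on the closed unit disc satisfies the boundary condition ∂u/∂ν + 1 = e^{u} on the unit circle, where ν is the outward unit normal (radial derivative). -/

import Mathlib

/-!
Writing `c = conj(a) z`, the function restricted to the ray through `z` is
`r ↦ log ((1 - |c|²) / |1 - c r|²)`, and `|1 - c r|² = 1 - 2 Re(c) r + |c|² r²` is a real
quadratic in `r`. Its logarithmic derivative at `r = 1` is `(2 Re c - 2|c|²) / |1 - c|²`, and
adding `1 = (1 - 2 Re c + |c|²) / |1 - c|²` gives the Poisson kernel `(1 - |c|²) / |1 - c|²`,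
which is `e^u(z)` because `|c| = |a|` on the unit circle.
-/

open Complex

theorem one_sub_ne_zero_of_norm_lt_one {R : Type*} [SeminormedRing R] [NormOneClass R] {x : R}
    (hx : ‖x‖ < 1) : 1 - x ≠ 0 := by
  rw [sub_ne_zero]
  rintro rfl
  exact (norm_one (α := R)).not_lt hx

theorem normSq_one_sub_mul_ofReal (c : ℂ) (r : ℝ) :
    normSq (1 - c * r) = 1 - 2 * c.re * r + normSq c * r ^ 2 := by
  simp only [normSq_apply, sub_re, sub_im, mul_re, mul_im, ofReal_re, ofReal_im, one_re, one_im]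
  ring

theorem hasDerivAt_sq_norm_one_sub_mul_ofReal (c : ℂ) (r : ℝ) :
    HasDerivAt (fun r : ℝ => ‖1 - c * r‖ ^ 2) (2 * normSq c * r - 2 * c.re) r := by
  simp only [Complex.sq_norm, normSq_one_sub_mul_ofReal]
  have h := (((hasDerivAt_id r).const_mul (2 * c.re)).const_sub 1).add
    ((hasDerivAt_pow 2 r).const_mul (normSq c))
  exact h.congr_deriv (by push_cast; ring)

theorem hasDerivAt_log_div_sq_norm_one_sub_mul_ofReal {A : ℝ} (hA : A ≠ 0) {c : ℂ} {r : ℝ}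
    (hr : 1 - c * r ≠ 0) :
    HasDerivAt (fun r : ℝ => Real.log (A / ‖1 - c * r‖ ^ 2))
      ((2 * c.re - 2 * normSq c * r) / ‖1 - c * r‖ ^ 2) r := by
  have hq : ‖1 - c * r‖ ^ 2 ≠ 0 := by positivity
  convert ((hasDerivAt_const r A).fun_div (hasDerivAt_sq_norm_one_sub_mul_ofReal c r) hq).log
    (div_ne_zero hA hq) using 1
  field_simp
  ring

theorem deriv_log_poissonKernel_ray_add_one {c : ℂ} (hc : ‖c‖ < 1) :
    deriv (fun r : ℝ => Real.log ((1 - ‖c‖ ^ 2) / ‖1 - c * r‖ ^ 2)) 1 + 1 =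
      (1 - ‖c‖ ^ 2) / ‖1 - c‖ ^ 2 := by
  have hA : 1 - ‖c‖ ^ 2 ≠ 0 := by nlinarith [norm_nonneg c]
  have h1c := one_sub_ne_zero_of_norm_lt_one hc
  have hq : ‖1 - c‖ ^ 2 ≠ 0 := by positivity
  have hderiv := hasDerivAt_log_div_sq_norm_one_sub_mul_ofReal hA (r := 1) (by simpa using h1c)
  simp only [ofReal_one, mul_one] at hderiv
  rw [hderiv.deriv]
  have hq_expand : ‖1 - c‖ ^ 2 = 1 - 2 * c.re + normSq c := by
    simpa [Complex.sq_norm] using normSq_one_sub_mul_ofReal c 1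
  rw [← Complex.sq_norm] at hq_expand ⊢
  field_simp
  linarith

/-- The function `u(z) = log((1−|a|²)/|1−conj(a)z|²)` satisfies the boundary
condition `∂u/∂ν + 1 = e^u` on the unit circle, where `∂u/∂ν` is the radial
derivative. -/
theorem extremal_log_boundary_condition (a : ℂ) (ha : ‖a‖ < 1) :
    ∀ z : ℂ, ‖z‖ = 1 →
      deriv (fun r : ℝ =>
          Real.log ((1 - ‖a‖ ^ 2) /
            ‖1 - (starRingEnd ℂ) a * ((r : ℂ) * z)‖ ^ 2)) 1 + 1 =
        Real.exp (Real.log ((1 - ‖a‖ ^ 2) /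
          ‖1 - (starRingEnd ℂ) a * z‖ ^ 2)) := by
  intro z hz
  set c := (starRingEnd ℂ) a * z
  have hc : ‖c‖ = ‖a‖ := by simp [c, hz]
  have hray : ∀ r : ℝ, (starRingEnd ℂ) a * ((r : ℂ) * z) = c * r := fun r => by ring
  simp only [hray, ← hc]
  have hca : ‖c‖ < 1 := hc ▸ ha
  rw [deriv_log_poissonKernel_ray_add_one hca, Real.exp_log]
  have h1c := norm_pos_iff.mpr (one_sub_ne_zero_of_norm_lt_one hca)
  have hA : 0 < 1 - ‖c‖ ^ 2 := by nlinarith [norm_nonneg c]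
  positivity
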